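/- arXiv:1903.03662 — 7 statements merged into one kernel-verified Lean document; each statement's English description precedes it below -/
import Mathlib

section
/- Consistency of recursive substitution: in any structural causal model, for disjoint subsets A, B ⊆ K, any i ∈ K \ (A ∪ B), any value assignments a to A and b to B, and any noise vector ε, if V_j(a)(ε) = b_j for every j ∈ B, then V_i(a,b)(ε) = V_i(a)(ε), where (a,b) denotes the intervention on A ∪ B with the corresponding values. -/
/-! ### Mixed graphs, walks, m-separation, SWIGs -/

/-- An acyclic directed mixed graph (directedness data; acyclicity is stated separately). -/
structure MixedGraph (V : Type) where
  /-- directed edges `i → j` -/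
  dir : V → V → Prop
  /-- bidirected edges `i ↔ j` -/
  bi : V → V → Prop
  bi_symm : ∀ i j, bi i j → bi j i

namespace MixedGraph

variable {V : Type}

/-- There is no directed cycle. -/
def Acyclic (G : MixedGraph V) : Prop := ∀ v, ¬ Relation.TransGen G.dir v v

/-- `v` is a descendant of `s` (reflexively). -/
def Desc (G : MixedGraph V) (s v : V) : Prop := Relation.ReflTransGen G.dir s v

/-- The set of ancestors of the set `W` (including `W` itself). -/
def AncSet (G : MixedGraph V) (W : Set V) : Set V := {v | ∃ w ∈ W, Relation.ReflTransGen G.dir v w}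

/-- There is an edge between `a` and `b` carrying an arrowhead at `a` iff `ha = true`
and an arrowhead at `b` iff `hb = true`. -/
def Step (G : MixedGraph V) (a b : V) (ha hb : Bool) : Prop :=
  match ha, hb with
  | false, true => G.dir a b
  | true, false => G.dir b a
  | true, true => G.bi a b
  | false, false => False

/-- Walks (with at least one edge) in a mixed graph, remembering arrowhead marks. -/
inductive Walk (G : MixedGraph V) : V → V → Type where
  | single {a b : V} (ha hb : Bool) (h : G.Step a b ha hb) : Walk G a b
  | cons {a b c : V} (ha hb : Bool) (h : G.Step a b ha hb) (w : Walk G b c) : Walk G a c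

/-- The arrowhead mark at the first vertex of a walk. -/
def Walk.firstArrow {G : MixedGraph V} : ∀ {x y : V}, Walk G x y → Bool
  | _, _, .single ha _ _ => ha
  | _, _, .cons ha _ _ _ => ha

/-- The list of vertices visited by a walk. -/
def Walk.support {G : MixedGraph V} : ∀ {x y : V}, Walk G x y → List V
  | x, y, .single _ _ _ => [x, y]
  | x, _, .cons _ _ _ w => x :: w.support

/-- A walk is a path if it has no repeated vertices. -/
def Walk.IsPath {G : MixedGraph V} {x y : V} (w : Walk G x y) : Prop := w.support.Nodup

/-- A walk is blocked by the set `C` if some intermediate vertex of it is a non-collider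
belonging to `C`, or a collider without descendants in `C`. -/
def Walk.Blocked (G : MixedGraph V) (C : Set V) : ∀ {x y : V}, Walk G x y → Prop
  | _, _, .single _ _ _ => False
  | _, _, .cons (b := b) _ hb _ w =>
      (if hb = true ∧ w.firstArrow = true then ∀ d, G.Desc b d → d ∉ C else b ∈ C)
        ∨ Walk.Blocked G C w

/-- The intermediate (non-endpoint) vertices of a walk. -/
def Walk.inner {G : MixedGraph V} : ∀ {x y : V}, Walk G x y → List V
  | _, _, .single _ _ _ => []
  | _, _, .cons (b := b) _ _ _ w => b :: w.inner

/-- m-separation relative to a set `R`: every path from `Y` to `Z` all of whose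
non-endpoint vertices lie in `R` is blocked by `C`.  (In a SWIG, `R` is taken to be the
set of random vertices.) -/
def MSepIn (G : MixedGraph V) (R : Set V) (Y Z C : Set V) : Prop :=
  ∀ y ∈ Y, ∀ z ∈ Z, ∀ w : G.Walk y z, w.IsPath → (∀ v ∈ w.inner, v ∈ R) →
    Walk.Blocked G C w

/-- m-separation: every path from `Y` to `Z` is blocked by `C`. -/
def MSep (G : MixedGraph V) (Y Z C : Set V) : Prop :=
  MSepIn G Set.univ Y Z C

/-- The single world intervention graph obtained by splitting every vertex in `A`
into a random half `Sum.inl` (inheriting all edges with an arrowhead at it) and a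
fixed half `Sum.inr` (inheriting all outgoing directed edges).  Vertices `Sum.inl i`
are the random vertices; vertices `Sum.inr i` for `i ∈ A` are the fixed vertices
(`Sum.inr i` for `i ∉ A` is an isolated junk vertex). -/
def swig (G : MixedGraph V) (A : Set V) : MixedGraph (V ⊕ V) where
  dir x y :=
    match x, y with
    | Sum.inl i, Sum.inl j => G.dir i j ∧ i ∉ A
    | Sum.inr i, Sum.inl j => G.dir i j ∧ i ∈ A
    | _, _ => False
  bi x y :=
    match x, y with
    | Sum.inl i, Sum.inl j => G.bi i j
    | _, _ => False
  bi_symm := by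
    rintro (i | i) (j | j) h
    · exact G.bi_symm i j h
    · exact False.elim h
    · exact False.elim h
    · exact False.elim h

/-- `G` with all edges carrying an arrowhead at a vertex of `X` removed (Pearl's `G_{X̄}`). -/
def removeInto (G : MixedGraph V) (X : Set V) : MixedGraph V where
  dir i j := G.dir i j ∧ j ∉ X
  bi i j := G.bi i j ∧ i ∉ X ∧ j ∉ X
  bi_symm := fun i j h => ⟨G.bi_symm i j h.1, h.2.2, h.2.1⟩

/-- `G` with all directed edges out of a vertex of `Z` removed (Pearl's `G_{Z̲}`). -/
def removeOut (G : MixedGraph V) (Z : Set V) : MixedGraph V where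
  dir i j := G.dir i j ∧ i ∉ Z
  bi := G.bi
  bi_symm := G.bi_symm

end MixedGraph

/-! ### Structural causal models over the index set `K = {1, …, k}` (as `Fin k`) -/

/-- A (recursive) structural causal model over the index set `Fin k`: each variable `i` has a
finite nonempty state space `X i`, a set of parents `pa i ⊆ {0, …, i-1}`, an exogenous noise
space `E i` and a structural function `f i`. -/
structure SCM (k : ℕ) where
  X : Fin k → Type
  finX : ∀ i, Fintype (X i)
  neX : ∀ i, Nonempty (X i)
  E : Fin k → Type
  pa : Fin k → Set (Fin k)
  pa_lt : ∀ i j, j ∈ pa i → j < i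
  f : ∀ i, (∀ j ∈ pa i, X j) → E i → X i

open Classical in
/-- The potential outcome `V_i(a)(ε)` under the intervention setting `A` to `a`,
defined by recursive substitution. -/
noncomputable def SCM.po {k : ℕ} (M : SCM k) (A : Set (Fin k)) (a : ∀ j ∈ A, M.X j)
    (ε : ∀ i, M.E i) : (i : Fin k) → M.X i
  | i => M.f i (fun j hj => if h : j ∈ A then a j h else M.po A a ε j) (ε i)
termination_by i => (i : ℕ)
decreasing_by exact M.pa_lt i j hj

/-- The causal DAG associated with a structural causal model: `j → i` iff `j ∈ pa i`. -/
def SCM.graph {k : ℕ} (M : SCM k) : MixedGraph (Fin k) where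
  dir i j := i ∈ M.pa j
  bi _ _ := False
  bi_symm := fun _ _ h => False.elim h

open Classical in
/-- Combination of two value assignments on `A` and on `B` into one on `A ∪ B`
(with the value from `A` taking precedence). -/
noncomputable def SCM.combine {k : ℕ} (M : SCM k) {A B : Set (Fin k)}
    (a : ∀ j ∈ A, M.X j) (b : ∀ j ∈ B, M.X j) : ∀ j ∈ A ∪ B, M.X j :=
  fun j hj => if h : j ∈ A then a j h else b j (((Set.mem_union j A B).mp hj).resolve_left h)

/-- **Consistency of recursive substitution** (Proposition 1): for disjoint `A, B ⊆ K`,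
`i ∈ K \ (A ∪ B)`, value assignments `a` to `A` and `b` to `B`, and any noise vector `ε`,
if `V_j(a)(ε) = b_j` for every `j ∈ B`, then `V_i(a, b)(ε) = V_i(a)(ε)`. -/
theorem consistency {k : ℕ} (M : SCM k) (A B : Set (Fin k)) (hAB : Disjoint A B)
    (i : Fin k) (hi : i ∉ A ∪ B)
    (a : ∀ j ∈ A, M.X j) (b : ∀ j ∈ B, M.X j) (ε : ∀ i, M.E i)
    (hb : ∀ j (hj : j ∈ B), M.po A a ε j = b j hj) :
    M.po (A ∪ B) (M.combine a b) ε i = M.po A a ε i := by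
  clear hi
  suffices h : ∀ n (i : Fin k), (i : ℕ) < n →
      M.po (A ∪ B) (M.combine a b) ε i = M.po A a ε i from h (k + 1) i (by omega)
  intro n
  induction n with
  | zero => omega
  | succ n IH =>
    intro i hin
    have ih : ∀ j : Fin k, j < i → M.po (A ∪ B) (M.combine a b) ε j = M.po A a ε j :=
      fun j hj => IH j (by omega)
    rw [SCM.po, SCM.po]
    congr 1
    funext j hj
    by_cases hjA : j ∈ A
    · simp [hjA, SCM.combine, Set.mem_union]
    · by_cases hjB : j ∈ B
      · simp [SCM.combine, hjA, hjB, hb j hjB]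
      · have : j ∉ A ∪ B := by simp [Set.mem_union, hjA, hjB]
        simp only [this, hjA, dif_neg, not_false_iff]
        exact ih j (M.pa_lt i j hj)
end

section
/- Causal irrelevance: in any structural causal model, let A ⊆ K with values a and let i ∈ K. Let A* be the set of all j ∈ A for which either j ∈ Pa_i, or there exists a sequence of indices w_1, …, w_m, none of which lies in A, with j ∈ Pa_{w_1}, w_l ∈ Pa_{w_{l+1}} for l = 1, …, m−1, and w_m ∈ Pa_i. Then for every noise vector ε, V_i(a)(ε) = V_i(a*)(ε), where a* is the restriction of a to A*. -/
/-- **Causal irrelevance** (Proposition 2): for `A ⊆ K` with values `a` and `i ∈ K`, letting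
`A*` be the set of `j ∈ A` such that either `j ∈ Pa_i` or there is a sequence `w_1, …, w_m`
avoiding `A` with `j ∈ Pa_{w_1}`, `w_l ∈ Pa_{w_{l+1}}` and `w_m ∈ Pa_i`, we have
`V_i(a)(ε) = V_i(a*)(ε)` for every noise vector `ε`, where `a*` restricts `a` to `A*`. -/
theorem causal_irrelevance {k : ℕ} (M : SCM k) (A : Set (Fin k)) (a : ∀ j ∈ A, M.X j)
    (i : Fin k)
    (Astar : Set (Fin k))
    (hAstar : Astar =
      {j | j ∈ A ∧ (j ∈ M.pa i ∨
        ∃ w, Relation.ReflTransGen (fun u v => u ∈ M.pa v ∧ v ∉ A) j w ∧ w ∉ A ∧ w ∈ M.pa i)})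
    (astar : ∀ j ∈ Astar, M.X j)
    (hastar : ∀ j (hj : j ∈ Astar), astar j hj = a j (by rw [hAstar] at hj; exact hj.1)) :
    ∀ ε : ∀ i, M.E i, M.po A a ε i = M.po Astar astar ε i := by
  intro ε
  have hsub : Astar ⊆ A := by
    rw [hAstar]; intro j hj; exact hj.1
  have key : ∀ v : Fin k, v ∉ A →
      (v ∈ M.pa i ∨ ∃ w, Relation.ReflTransGen (fun u v => u ∈ M.pa v ∧ v ∉ A) v w ∧
        w ∉ A ∧ w ∈ M.pa i) →
      M.po A a ε v = M.po Astar astar ε v := by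
    suffices h : ∀ n, ∀ v : Fin k, (v : ℕ) < n → v ∉ A →
        (v ∈ M.pa i ∨ ∃ w, Relation.ReflTransGen (fun u v => u ∈ M.pa v ∧ v ∉ A) v w ∧
          w ∉ A ∧ w ∈ M.pa i) →
        M.po A a ε v = M.po Astar astar ε v by
      intro v; exact h (v + 1) v (Nat.lt_succ_self _)
    intro n
    induction n with
    | zero => intro v hv; exact absurd hv (Nat.not_lt_zero _)
    | succ n ih =>
      intro v hvn hvA hv
      rw [SCM.po, SCM.po]
      congr 1
      funext j hj
      by_cases hjA : j ∈ A
      · have hjAstar : j ∈ Astar := by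
          rw [hAstar]
          refine ⟨hjA, Or.inr ?_⟩
          rcases hv with hvi | ⟨w, hw, hwA, hwi⟩
          · exact ⟨v, Relation.ReflTransGen.single ⟨hj, hvA⟩, hvA, hvi⟩
          · exact ⟨w, Relation.ReflTransGen.head ⟨hj, hvA⟩ hw, hwA, hwi⟩
        rw [dif_pos hjA, dif_pos hjAstar, hastar]
      · have hjAstar : j ∉ Astar := fun h => hjA (hsub h)
        rw [dif_neg hjA, dif_neg hjAstar]
        refine ih j (Nat.lt_of_lt_of_le (M.pa_lt v j hj) (Nat.lt_succ_iff.mp hvn)) hjA ?_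
        rcases hv with hvi | ⟨w, hw, hwA, hwi⟩
        · exact Or.inr ⟨v, Relation.ReflTransGen.single ⟨hj, hvA⟩, hvA, hvi⟩
        · exact Or.inr ⟨w, Relation.ReflTransGen.head ⟨hj, hvA⟩ hw, hwA, hwi⟩
  rw [SCM.po, SCM.po]
  congr 1
  funext j hj
  by_cases hjA : j ∈ A
  · have hjAstar : j ∈ Astar := by rw [hAstar]; exact ⟨hjA, Or.inl hj⟩
    rw [dif_pos hjA, dif_pos hjAstar, hastar]
  · have hjAstar : j ∉ Astar := fun h => hjA (hsub h)
    rw [dif_neg hjA, dif_neg hjAstar]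
    exact key j hjA (Or.inl hj)
end

section
/- Intervention monotonicity: let G be a DAG or ADMG on vertex set K, let A ⊆ A'' ⊆ K, A' ⊆ A, and let Y, Z, X be disjoint subsets of K. If (Y(a), a' ⊥ Z(a) | X(a))_{G(a)} holds in the SWIG G(a) (with a' the fixed vertices corresponding to A'), then (Y(a''), a' ⊥ Z(a'') | X(a''))_{G(a'')} holds in the SWIG G(a''). -/
section Aux
open MixedGraph

variable {V : Type} {G : MixedGraph V} {A A'' : Set V}

lemma swig_step_transfer (hA'' : A ⊆ A'') {a b : V ⊕ V} {ha hb : Bool}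
    (h : (G.swig A'').Step a b ha hb)
    (hx : (∃ i, a = Sum.inl i) ∨ (∃ i, a = Sum.inr i ∧ i ∈ A))
    (hb' : ∃ j, b = Sum.inl j) : (G.swig A).Step a b ha hb := by
  obtain ⟨j, rfl⟩ := hb'
  match ha, hb, h with
  | false, true, h =>
      rcases hx with ⟨i, rfl⟩ | ⟨i, rfl, hiA⟩
      · exact ⟨h.1, fun hiA => h.2 (hA'' hiA)⟩
      · exact ⟨h.1, hiA⟩
  | true, false, h =>
      rcases hx with ⟨i, rfl⟩ | ⟨i, rfl, hiA⟩
      · exact ⟨h.1, fun hjA => h.2 (hA'' hjA)⟩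
      · exact h.elim
  | true, true, h =>
      rcases hx with ⟨i, rfl⟩ | ⟨i, rfl, hiA⟩
      · exact h
      · exact h.elim

lemma swig_desc_mono (hA'' : A ⊆ A'') {i : V} {d : V ⊕ V}
    (h : (G.swig A'').Desc (Sum.inl i) d) : (G.swig A).Desc (Sum.inl i) d := by
  have : ∀ u, Relation.ReflTransGen (G.swig A'').dir u d →
      ∀ j, u = Sum.inl j → Relation.ReflTransGen (G.swig A).dir u d := by
    intro u h
    induction h using Relation.ReflTransGen.head_induction_on with
    | refl => intro j hj; exact Relation.ReflTransGen.refl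
    | head hstep _ ih =>
        rename_i a c _
        intro j hj
        subst hj
        cases c with
        | inl k =>
            exact Relation.ReflTransGen.head (b := Sum.inl k)
              ⟨hstep.1, fun hA => hstep.2 (hA'' hA)⟩ (ih k rfl)
        | inr k => exact hstep.elim
  exact this _ h i rfl

lemma walk_support_eq {x z : V ⊕ V} :
    ∀ (w : (G.swig A'').Walk x z), w.support = x :: (w.inner ++ [z])
  | .single _ _ _ => rfl
  | .cons _ _ _ w => by
      show _ :: w.support = _
      rw [walk_support_eq w]; rfl

lemma walk_support_eq' {GG : MixedGraph (V ⊕ V)} {x z : V ⊕ V} :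
    ∀ (w : GG.Walk x z), w.support = x :: (w.inner ++ [z])
  | .single _ _ _ => rfl
  | .cons _ _ _ w => by
      show _ :: w.support = _
      rw [walk_support_eq' w]; rfl

lemma walk_transfer (hA'' : A ⊆ A'') (C : Set (V ⊕ V)) :
    ∀ {x z : V ⊕ V} (w : (G.swig A'').Walk x z),
    (∀ v ∈ w.support.tail, ∃ u, v = Sum.inl u) →
    ((∃ i, x = Sum.inl i) ∨ (∃ i, x = Sum.inr i ∧ i ∈ A)) →
    ∃ w' : (G.swig A).Walk x z,
      w'.support = w.support ∧ w'.firstArrow = w.firstArrow ∧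
      (Walk.Blocked (G.swig A) C w' → Walk.Blocked (G.swig A'') C w) := by
  intro x z w
  induction w with
  | single ha hb h =>
      rename_i a b
      intro hsup hx
      have hb' : ∃ u, b = Sum.inl u := hsup b (by simp [Walk.support])
      refine ⟨.single ha hb (swig_step_transfer hA'' h hx hb'), ?_, ?_, ?_⟩
      · rfl
      · rfl
      · exact fun hB => hB.elim
  | cons ha hb h w ih =>
      rename_i a b c
      intro hsup hx
      have hsup' : ∀ v ∈ w.support.tail, ∃ u, v = Sum.inl u := by
        intro v hv
        apply hsup
        show v ∈ w.support
        cases w with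
        | single _ _ _ => simp [Walk.support] at hv ⊢; tauto
        | cons _ _ _ _ => exact List.mem_of_mem_tail hv
      have hbinl : ∃ u, b = Sum.inl u := by
        apply hsup
        show b ∈ w.support
        cases w with
        | single _ _ _ => simp [Walk.support]
        | cons _ _ _ _ => simp [Walk.support]
      obtain ⟨w', hsupeq, hfa, hblk⟩ := ih hsup' (Or.inl hbinl)
      refine ⟨.cons ha hb (swig_step_transfer hA'' h hx hbinl) w', ?_, rfl, ?_⟩
      · show a :: w'.support = a :: w.support
        rw [hsupeq]
      · intro hB
        rcases hB with hB | hB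
        · left
          rw [hfa] at hB
          by_cases hcol : hb = true ∧ w.firstArrow = true
          · rw [if_pos hcol] at hB ⊢
            obtain ⟨u, rfl⟩ := hbinl
            intro d hd
            exact hB d (swig_desc_mono hA'' hd)
          · rwa [if_neg hcol] at hB ⊢
        · exact Or.inr (hblk hB)

end Aux

open MixedGraph in
/-- **Intervention monotonicity** (Proposition 4): for a DAG or ADMG `G`, sets
`A' ⊆ A ⊆ A''` and disjoint `Y, Z, X`, if `(Y(a), a' ⊥ Z(a) | X(a))` holds in the SWIG
`G(a)`, then `(Y(a''), a' ⊥ Z(a'') | X(a''))` holds in the SWIG `G(a'')`. -/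
theorem intervention_monotonicity {V : Type} (G : MixedGraph V) (hacyc : G.Acyclic)
    (A A' A'' : Set V) (hA' : A' ⊆ A) (hA'' : A ⊆ A'')
    (Y Z X : Set V) (hYZ : Disjoint Y Z) (hYX : Disjoint Y X) (hZX : Disjoint Z X)
    (hsep : MSepIn (G.swig A) (Set.range Sum.inl) (Sum.inl '' Y ∪ Sum.inr '' A') (Sum.inl '' Z) (Sum.inl '' X)) :
    MSepIn (G.swig A'') (Set.range Sum.inl) (Sum.inl '' Y ∪ Sum.inr '' A') (Sum.inl '' Z) (Sum.inl '' X) := by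
  intro y hy z hz w hpath hinner
  obtain ⟨z0, hz0, rfl⟩ := hz
  have hsup : ∀ v ∈ w.support.tail, ∃ u, v = Sum.inl u := by
    intro v hv
    rw [walk_support_eq'] at hv
    simp only [List.tail_cons, List.mem_append, List.mem_singleton] at hv
    rcases hv with hv | rfl
    · obtain ⟨u, hu⟩ := hinner v hv
      exact ⟨u, hu.symm⟩
    · exact ⟨z0, rfl⟩
  have hx : (∃ i, y = Sum.inl i) ∨ (∃ i, y = Sum.inr i ∧ i ∈ A) := by
    rcases hy with ⟨i, _, rfl⟩ | ⟨i, hi, rfl⟩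
    · exact Or.inl ⟨i, rfl⟩
    · exact Or.inr ⟨i, rfl, hA' hi⟩
  obtain ⟨w', hsupeq, _, hblk⟩ := walk_transfer hA'' (Sum.inl '' X) w hsup hx
  apply hblk
  have hinner' : w'.inner = w.inner := by
    have h1 := walk_support_eq' (GG := G.swig A) w'
    have h2 := walk_support_eq' (GG := G.swig A'') w
    rw [h1, h2] at hsupeq
    simpa using hsupeq
  apply hsep y hy _ ⟨z0, hz0, rfl⟩ w'
  · unfold MixedGraph.Walk.IsPath
    rw [hsupeq]
    exact hpath
  · rw [hinner']
    exact hinner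
end

section
/- Equivalence of Rule 1 of po-calculus and Rule 1 of do-calculus: let G be an ADMG with vertex set V and let Y, Z, W, X be disjoint subsets of V. Then (Y(x) ⊥ Z(x) | W(x))_{G(x)} holds in the SWIG G(x) if and only if (Y ⊥_m Z | W ∪ X)_{G_{X̄}} holds, where G_{X̄} is G with every edge carrying an arrowhead at a vertex of X removed. -/
section Aux
namespace MixedGraph

variable {V : Type}

/-! ### Basic walk lemmas -/

lemma Walk.support_eq {G : MixedGraph V} : ∀ {x y : V} (w : Walk G x y),
    w.support = x :: (w.inner ++ [y])
  | _, _, .single _ _ _ => rfl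
  | _, _, .cons _ _ _ w => by simp [Walk.support, Walk.inner, Walk.support_eq w]

/-! ### Step lemmas -/

lemma step_up {G : MixedGraph V} {X : Set V} {i j : V} {ha hb : Bool}
    (h : (G.removeOut X).Step i j ha hb) :
    (G.swig X).Step (Sum.inl i) (Sum.inl j) ha hb := by
  cases ha <;> cases hb <;> exact h

lemma step_down {G : MixedGraph V} {X : Set V} {i j : V} {ha hb : Bool}
    (h : (G.swig X).Step (Sum.inl i) (Sum.inl j) ha hb) :
    (G.removeOut X).Step i j ha hb := by
  cases ha <;> cases hb <;> exact h

lemma step_iff {G : MixedGraph V} {X : Set V} {i j : V} {ha hb : Bool}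
    (hi : i ∉ X) (hj : j ∉ X) :
    (G.removeOut X).Step i j ha hb ↔ (G.removeInto X).Step i j ha hb := by
  cases ha <;> cases hb <;> simp_all [Step, removeOut, removeInto]

/-! ### Descendant lemmas -/

lemma desc_into_of_out {G : MixedGraph V} {X : Set V} {b d : V}
    (h : (G.removeOut X).Desc b d) : d ∉ X → (G.removeInto X).Desc b d := by
  induction h with
  | refl => intro _; exact Relation.ReflTransGen.refl
  | tail _ hstep ih =>
      intro hd
      exact Relation.ReflTransGen.tail (ih hstep.2) ⟨hstep.1, hd⟩

lemma desc_out_of_into {G : MixedGraph V} {X : Set V} {b d : V}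
    (h : (G.removeInto X).Desc b d) : b ∉ X → (G.removeOut X).Desc b d ∧ d ∉ X := by
  induction h using Relation.ReflTransGen.head_induction_on with
  | refl => intro hb; exact ⟨Relation.ReflTransGen.refl, hb⟩
  | head hstep _ ih =>
      intro hb
      obtain ⟨h1, h2⟩ := ih hstep.2
      exact ⟨Relation.ReflTransGen.head ⟨hstep.1, hb⟩ h1, h2⟩

lemma desc_swig_down {G : MixedGraph V} {X : Set V} {e : V ⊕ V} :
    ∀ {p : V ⊕ V}, (G.swig X).Desc p e →
      ∀ b : V, p = Sum.inl b → ∃ d, e = Sum.inl d ∧ (G.removeOut X).Desc b d := by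
  intro p h
  induction h using Relation.ReflTransGen.head_induction_on with
  | refl => intro b hb; exact ⟨b, hb, Relation.ReflTransGen.refl⟩
  | @head a c hstep htail ih =>
      rintro b rfl
      cases c with
      | inl j =>
          obtain ⟨d, rfl, hd⟩ := ih j rfl
          exact ⟨d, rfl, Relation.ReflTransGen.head hstep hd⟩
      | inr j => exact hstep.elim

lemma desc_swig_up {G : MixedGraph V} {X : Set V} {b d : V}
    (h : (G.removeOut X).Desc b d) :
    (G.swig X).Desc (Sum.inl b) (Sum.inl d) :=
  Relation.ReflTransGen.lift Sum.inl (fun _ _ hij => hij) _ _ h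

/-! ### Collider condition equivalences -/

lemma collider_swig {G : MixedGraph V} {X : Set V} {C : Set V} {b : V} :
    (∀ e, (G.swig X).Desc (Sum.inl b) e → e ∉ Sum.inl '' C) ↔
      (∀ d, (G.removeOut X).Desc b d → d ∉ C) := by
  constructor
  · intro h d hd hdC
    exact h _ (desc_swig_up hd) ⟨d, hdC, rfl⟩
  · rintro h e he ⟨d, hdC, rfl⟩
    obtain ⟨d', he', hd'⟩ := desc_swig_down he b rfl
    cases Sum.inl_injective he'.symm
    exact h _ hd' hdC

lemma collider_outinto {G : MixedGraph V} {X W : Set V} (hWX : Disjoint W X) {b : V}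
    (hb : b ∉ X) :
    (∀ d, (G.removeOut X).Desc b d → d ∉ W) ↔
      (∀ d, (G.removeInto X).Desc b d → d ∉ W ∪ X) := by
  constructor
  · intro h d hd
    obtain ⟨h1, h2⟩ := desc_out_of_into hd hb
    simp only [Set.mem_union, not_or]
    exact ⟨h _ h1, h2⟩
  · intro h d hd hdW
    have hdX : d ∉ X := Set.disjoint_left.mp hWX hdW
    exact h d (desc_into_of_out hd hdX) (Or.inl hdW)

/-! ### Lifting walks to the SWIG -/

def liftWalk {G : MixedGraph V} (X : Set V) :
    ∀ {a b : V}, Walk (G.removeOut X) a b → Walk (G.swig X) (Sum.inl a) (Sum.inl b)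
  | _, _, .single ha hb h => .single ha hb (step_up h)
  | _, _, .cons ha hb h w => .cons ha hb (step_up h) (liftWalk X w)

lemma liftWalk_support {G : MixedGraph V} {X : Set V} :
    ∀ {a b : V} (w : Walk (G.removeOut X) a b),
      (liftWalk X w).support = w.support.map Sum.inl
  | _, _, .single _ _ _ => rfl
  | _, _, .cons _ _ _ w => by
      simp [liftWalk, Walk.support, liftWalk_support w]

lemma liftWalk_inner {G : MixedGraph V} {X : Set V} :
    ∀ {a b : V} (w : Walk (G.removeOut X) a b),
      (liftWalk X w).inner = w.inner.map Sum.inl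
  | _, _, .single _ _ _ => rfl
  | _, _, .cons _ _ _ w => by
      simp [liftWalk, Walk.inner, liftWalk_inner w]

lemma liftWalk_firstArrow {G : MixedGraph V} {X : Set V} :
    ∀ {a b : V} (w : Walk (G.removeOut X) a b),
      (liftWalk X w).firstArrow = w.firstArrow
  | _, _, .single _ _ _ => rfl
  | _, _, .cons _ _ _ _ => rfl

lemma liftWalk_blocked {G : MixedGraph V} {X : Set V} {C : Set V} :
    ∀ {a b : V} (w : Walk (G.removeOut X) a b),
      Walk.Blocked (G.swig X) (Sum.inl '' C) (liftWalk X w) ↔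
        Walk.Blocked (G.removeOut X) C w
  | _, _, .single _ _ _ => Iff.rfl
  | _, _, .cons (b := m) ha hb h w => by
      simp only [liftWalk, Walk.Blocked, liftWalk_firstArrow w]
      apply or_congr _ (liftWalk_blocked w)
      split_ifs with hc
      · exact collider_swig
      · constructor
        · rintro ⟨m', hm', hmm⟩; cases Sum.inl_injective hmm.symm; exact hm'
        · intro hm; exact ⟨m, hm, rfl⟩

/-! ### Lowering walks from the SWIG -/

lemma down {G : MixedGraph V} {X : Set V} (C : Set V) :
    ∀ {p q : V ⊕ V} (w : Walk (G.swig X) p q),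
      (∀ v ∈ w.inner, ∃ u, v = Sum.inl u) →
      ∀ a b, p = Sum.inl a → q = Sum.inl b →
      ∃ w' : Walk (G.removeOut X) a b,
        w.support = w'.support.map Sum.inl ∧
        w.firstArrow = w'.firstArrow ∧
        (Walk.Blocked (G.swig X) (Sum.inl '' C) w ↔ Walk.Blocked (G.removeOut X) C w') := by
  intro p q w
  induction w with
  | @single p q ha hb h =>
      rintro _ a b rfl rfl
      exact ⟨.single ha hb (step_down h), rfl, rfl, Iff.rfl⟩
  | @cons p m q ha hb h w ih =>
      rintro hinner a b rfl rfl
      obtain ⟨m', rfl⟩ : ∃ u, m = Sum.inl u := hinner m (by simp [Walk.inner])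
      obtain ⟨w', hsupp, hfa, hbl⟩ :=
        ih (fun v hv => hinner v (by simp [Walk.inner, hv])) m' b rfl rfl
      refine ⟨.cons ha hb (step_down h) w', ?_, rfl, ?_⟩
      · simp [Walk.support, hsupp]
      · simp only [Walk.Blocked, hfa]
        apply or_congr _ hbl
        split_ifs with hc
        · exact collider_swig
        · constructor
          · rintro ⟨u, hu, huu⟩; cases Sum.inl_injective huu.symm; exact hu
          · intro hm; exact ⟨m', hm, rfl⟩

/-! ### Transferring walks between graphs on the same vertex set -/

lemma Walk.start_mem_support {G : MixedGraph V} {x y : V} (w : Walk G x y) :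
    x ∈ w.support := by
  rw [w.support_eq]; simp

lemma mem_support_cons {G : MixedGraph V} {a b c : V} {ha hb : Bool} {h : G.Step a b ha hb}
    {w : Walk G b c} {v : V} (hv : v ∈ w.support) :
    v ∈ (Walk.cons ha hb h w).support := by
  simp only [Walk.support]; exact List.mem_cons_of_mem _ hv

def transfer {G1 G2 : MixedGraph V} {X : Set V}
    (H : ∀ i j ha hb, i ∉ X → j ∉ X → G1.Step i j ha hb → G2.Step i j ha hb) :
    ∀ {a b : V} (w : Walk G1 a b), (∀ v ∈ w.support, v ∉ X) → Walk G2 a b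
  | a, b, .single ha hb h, hs =>
      .single ha hb (H a b ha hb (hs a (by simp [Walk.support]))
        (hs b (by simp [Walk.support])) h)
  | a, c, .cons (b := m) ha hb h w, hs =>
      .cons ha hb
        (H a m ha hb (hs a (by simp [Walk.support]))
          (hs m (mem_support_cons w.start_mem_support)) h)
        (transfer H w (fun v hv => hs v (mem_support_cons hv)))

lemma transfer_support {G1 G2 : MixedGraph V} {X : Set V}
    (H : ∀ i j ha hb, i ∉ X → j ∉ X → G1.Step i j ha hb → G2.Step i j ha hb) :
    ∀ {a b : V} (w : Walk G1 a b) (hs : ∀ v ∈ w.support, v ∉ X),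
      (transfer H w hs).support = w.support
  | _, _, .single _ _ _, _ => rfl
  | _, _, .cons _ _ _ w, hs => by
      simp [transfer, Walk.support, transfer_support H w]

lemma transfer_firstArrow {G1 G2 : MixedGraph V} {X : Set V}
    (H : ∀ i j ha hb, i ∉ X → j ∉ X → G1.Step i j ha hb → G2.Step i j ha hb) :
    ∀ {a b : V} (w : Walk G1 a b) (hs : ∀ v ∈ w.support, v ∉ X),
      (transfer H w hs).firstArrow = w.firstArrow
  | _, _, .single _ _ _, _ => by simp [transfer, Walk.firstArrow]
  | _, _, .cons _ _ _ _, _ => by simp [transfer, Walk.firstArrow]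

lemma transfer_blocked {G1 G2 : MixedGraph V} {X : Set V} {C1 C2 : Set V}
    (H : ∀ i j ha hb, i ∉ X → j ∉ X → G1.Step i j ha hb → G2.Step i j ha hb)
    (hmem : ∀ b, b ∉ X → (b ∈ C1 ↔ b ∈ C2))
    (hcol : ∀ b, b ∉ X →
      ((∀ d, G1.Desc b d → d ∉ C1) ↔ (∀ d, G2.Desc b d → d ∉ C2))) :
    ∀ {a b : V} (w : Walk G1 a b) (hs : ∀ v ∈ w.support, v ∉ X),
      (Walk.Blocked G1 C1 w ↔ Walk.Blocked G2 C2 (transfer H w hs))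
  | _, _, .single _ _ _, _ => Iff.rfl
  | _, _, .cons (b := m) ha hb h w, hs => by
      have hm : m ∉ X := hs m (mem_support_cons w.start_mem_support)
      simp only [transfer, Walk.Blocked, transfer_firstArrow H w]
      apply or_congr _ (transfer_blocked H hmem hcol w _)
      split_ifs with hc
      · exact hcol m hm
      · exact hmem m hm

/-! ### Walks through X are automatically blocked -/

lemma hb_true_removeOut {G : MixedGraph V} {X : Set V} {a m : V} {ha hb : Bool}
    (h : (G.removeOut X).Step a m ha hb) (hm : m ∈ X) : hb = true := by
  cases hb
  · cases ha
    · exact h.elim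
    · exact absurd hm h.2
  · rfl

lemma firstArrow_true_removeOut {G : MixedGraph V} {X : Set V} {m c : V}
    (w : Walk (G.removeOut X) m c) (hm : m ∈ X) : w.firstArrow = true := by
  cases w with
  | single ha hb h =>
      cases ha
      · cases hb
        · exact h.elim
        · exact absurd hm h.2
      · rfl
  | cons ha hb h w =>
      cases ha
      · cases hb
        · exact h.elim
        · exact absurd hm h.2
      · rfl

lemma desc_removeOut_self {G : MixedGraph V} {X : Set V} {m d : V}
    (hm : m ∈ X) (h : (G.removeOut X).Desc m d) : d = m := by
  rcases Relation.ReflTransGen.cases_head h with rfl | ⟨c, hc, _⟩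
  · rfl
  · exact absurd hm hc.2

lemma blocked_removeOut_of_inner_X {G : MixedGraph V} {X W : Set V} (hWX : Disjoint W X) :
    ∀ {a b : V} (w : Walk (G.removeOut X) a b),
      (∃ v ∈ w.inner, v ∈ X) → Walk.Blocked (G.removeOut X) W w
  | _, _, .single _ _ _, hv => by simp [Walk.inner] at hv
  | _, _, .cons (b := m) ha hb h w, hv => by
      simp only [Walk.inner, List.mem_cons] at hv
      obtain ⟨v, (rfl | hvin), hvX⟩ := hv
      · left
        rw [hb_true_removeOut h hvX, firstArrow_true_removeOut w hvX]
        simp only [and_self, if_true]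
        intro d hd
        rw [desc_removeOut_self hvX hd]
        exact Set.disjoint_right.mp hWX hvX
      · exact Or.inr (blocked_removeOut_of_inner_X hWX w ⟨v, hvin, hvX⟩)

lemma hb_false_removeInto {G : MixedGraph V} {X : Set V} {a m : V} {ha hb : Bool}
    (h : (G.removeInto X).Step a m ha hb) (hm : m ∈ X) : hb = false := by
  cases hb
  · rfl
  · cases ha
    · exact absurd hm h.2
    · exact absurd hm h.2.2

lemma blocked_removeInto_of_inner_X {G : MixedGraph V} {X W : Set V} :
    ∀ {a b : V} (w : Walk (G.removeInto X) a b),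
      (∃ v ∈ w.inner, v ∈ X) → Walk.Blocked (G.removeInto X) (W ∪ X) w
  | _, _, .single _ _ _, hv => by simp [Walk.inner] at hv
  | _, _, .cons (b := m) ha hb h w, hv => by
      simp only [Walk.inner, List.mem_cons] at hv
      obtain ⟨v, (rfl | hvin), hvX⟩ := hv
      · left
        rw [hb_false_removeInto h hvX]
        simp only [Bool.false_eq_true, false_and, if_false]
        exact Or.inr hvX
      · exact Or.inr (blocked_removeInto_of_inner_X w ⟨v, hvin, hvX⟩)

end MixedGraph
end Aux
open MixedGraph in
/-- **Equivalence of Rule 1 of po-calculus and Rule 1 of do-calculus**: for an ADMG `G` and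
disjoint `Y, Z, W, X ⊆ V`, `(Y(x) ⊥ Z(x) | W(x))` holds in the SWIG `G(x)` iff
`(Y ⊥_m Z | W ∪ X)` holds in `G_{X̄}` (all edges with an arrowhead at `X` removed). -/
theorem rule1_po_iff_do {V : Type} (G : MixedGraph V) (hacyc : G.Acyclic)
    (Y Z W X : Set V)
    (hYZ : Disjoint Y Z) (hYW : Disjoint Y W) (hYX : Disjoint Y X)
    (hZW : Disjoint Z W) (hZX : Disjoint Z X) (hWX : Disjoint W X) :
    MSepIn (G.swig X) (Set.range Sum.inl) (Sum.inl '' Y) (Sum.inl '' Z) (Sum.inl '' W) ↔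
      MSep (G.removeInto X) Y Z (W ∪ X) := by
  have stepA : MSepIn (G.swig X) (Set.range Sum.inl) (Sum.inl '' Y) (Sum.inl '' Z)
      (Sum.inl '' W) ↔ MSep (G.removeOut X) Y Z W := by
    constructor
    · intro h y hy z hz w hpath _
      have hb := h (Sum.inl y) ⟨y, hy, rfl⟩ (Sum.inl z) ⟨z, hz, rfl⟩ (liftWalk X w)
        (by rw [Walk.IsPath, liftWalk_support]; exact hpath.map Sum.inl_injective)
        (by rw [liftWalk_inner]; intro v hv
            obtain ⟨u, _, rfl⟩ := List.mem_map.mp hv; exact ⟨u, rfl⟩)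
      exact (liftWalk_blocked w).mp hb
    · rintro h y' ⟨y, hy, rfl⟩ z' ⟨z, hz, rfl⟩ w hpath hinner
      obtain ⟨w', hsupp, hfa, hbl⟩ :=
        down W w (fun v hv => (hinner v hv).imp fun u hu => hu.symm) y z rfl rfl
      have hpath' : w'.IsPath := by
        rw [Walk.IsPath] at hpath ⊢
        rw [hsupp] at hpath
        exact hpath.of_map
      exact hbl.mpr (h y hy z hz w' hpath' (fun v _ => Set.mem_univ v))
  have hmem : ∀ b, b ∉ X → (b ∈ W ↔ b ∈ W ∪ X) := by
    intro b hb; simp [Set.mem_union, hb]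
  have stepB : MSep (G.removeOut X) Y Z W ↔ MSep (G.removeInto X) Y Z (W ∪ X) := by
    constructor
    · intro h y hy z hz w hpath _
      by_cases hX : ∃ v ∈ w.inner, v ∈ X
      · exact blocked_removeInto_of_inner_X w hX
      · push_neg at hX
        have hs : ∀ v ∈ w.support, v ∉ X := by
          intro v hv
          rw [Walk.support_eq] at hv
          simp only [List.mem_cons, List.mem_append, List.mem_singleton,
            List.not_mem_nil, or_false] at hv
          rcases hv with rfl | hv | rfl
          · exact Set.disjoint_left.mp hYX hy
          · exact hX v hv
          · exact Set.disjoint_left.mp hZX hz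
        have H : ∀ i j ha hb, i ∉ X → j ∉ X →
            (G.removeInto X).Step i j ha hb → (G.removeOut X).Step i j ha hb :=
          fun i j ha hb hi hj => (step_iff hi hj).mpr
        have hb1 := h y hy z hz (transfer H w hs)
          (by rw [Walk.IsPath, transfer_support]; exact hpath) (fun v _ => Set.mem_univ v)
        exact (transfer_blocked H (fun b hb => (hmem b hb).symm)
          (fun b hb => (collider_outinto hWX hb).symm) w hs).mpr hb1
    · intro h y hy z hz w hpath _
      by_cases hX : ∃ v ∈ w.inner, v ∈ X
      · exact blocked_removeOut_of_inner_X hWX w hX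
      · push_neg at hX
        have hs : ∀ v ∈ w.support, v ∉ X := by
          intro v hv
          rw [Walk.support_eq] at hv
          simp only [List.mem_cons, List.mem_append, List.mem_singleton,
            List.not_mem_nil, or_false] at hv
          rcases hv with rfl | hv | rfl
          · exact Set.disjoint_left.mp hYX hy
          · exact hX v hv
          · exact Set.disjoint_left.mp hZX hz
        have H : ∀ i j ha hb, i ∉ X → j ∉ X →
            (G.removeOut X).Step i j ha hb → (G.removeInto X).Step i j ha hb :=
          fun i j ha hb hi hj => (step_iff hi hj).mp
        have hb1 := h y hy z hz (transfer H w hs)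
          (by rw [Walk.IsPath, transfer_support]; exact hpath) (fun v _ => Set.mem_univ v)
        exact (transfer_blocked H hmem
          (fun b hb => collider_outinto hWX hb) w hs).mpr hb1
  exact stepA.trans stepB
end

section
/- Equivalence of Rule 3 of po-calculus and Rule 3 of do-calculus: let G be an ADMG with vertex set V, let Y, Z, W, X be disjoint subsets of V, and set Z1 = Z \ An_{G_{X̄}}(W) and Z2 = Z ∩ An_{G_{X̄}}(W). Then (Y ⊥_m Z | W ∪ X)_{G_{X̄, Z̄1}} holds if and only if both (Y(x,z1), W(x,z1) ⊥ z1)_{G(x,z1)} and (Y(x,z1) ⊥ Z2(x,z1) | W(x,z1))_{G(x,z1)} hold in the SWIG G(x,z1). -/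
namespace Rule3Aux

open MixedGraph Relation

variable {V : Type}

lemma chain_heads {r : V → V → Prop} {a : V} {l : List V} (h : List.Chain r a l) :
    ∀ v ∈ l, ∃ u, r u v := by
  induction l generalizing a with
  | nil => intro v hv; cases hv
  | cons b l ih =>
    intro v hv
    have h' : List.IsChain r (a :: b :: l) := h
    rcases List.mem_cons.1 hv with rfl | hv
    · exact ⟨a, (List.isChain_cons_cons.1 h').1⟩
    · exact ih (List.isChain_cons_cons.1 h').2 v hv

lemma chain_dedup {r : V → V → Prop} : ∀ (n : ℕ) (l : List V) (a : V), l.length ≤ n →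
    List.Chain r a l →
    ∃ l', List.Chain r a l' ∧ (a::l').getLast? = (a::l).getLast? ∧ (a::l').Nodup ∧
      ∀ v ∈ l', v ∈ l := by
  intro n
  induction n with
  | zero =>
    intro l a hl _
    have : l = [] := List.length_eq_zero_iff.1 (Nat.le_zero.1 hl)
    subst this
    exact ⟨[], List.Chain.nil, rfl, List.nodup_singleton a, by simp⟩
  | succ n ih =>
    intro l a hl hc
    by_cases ha : a ∈ l
    · obtain ⟨s, t, rfl⟩ := List.append_of_mem ha
      have hct : List.Chain r a t := ((List.isChain_split (l₁ := a :: s) (c := a) (l₂ := t)).1 hc).2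
      have hlt : t.length ≤ n := by
        have := List.length_append (as := s) (bs := a :: t) ▸ hl
        simp at this ⊢; omega
      obtain ⟨l', h1, h2, h3, h4⟩ := ih t a hlt hct
      refine ⟨l', h1, ?_, h3, fun v hv => by simp [h4 v hv]⟩
      rw [h2]
      have : a :: (s ++ a :: t) = (a :: s) ++ (a :: t) := by simp
      rw [this, List.getLast?_append_of_ne_nil _ (by simp)]
    · cases l with
      | nil => exact ⟨[], List.Chain.nil, rfl, List.nodup_singleton a, by simp⟩
      | cons c l3 =>
        have hc' : List.Chain r c l3 := (List.chain_cons.1 hc).2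
        obtain ⟨l'', h1, h2, h3, h4⟩ := ih l3 c (by simp at hl; omega) hc'
        refine ⟨c :: l'', List.chain_cons.2 ⟨(List.chain_cons.1 hc).1, h1⟩, ?_, ?_, ?_⟩
        · rw [List.getLast?_cons_cons, h2, List.getLast?_cons_cons]
        · refine List.nodup_cons.2 ⟨?_, h3⟩
          intro hmem
          rcases List.mem_cons.1 hmem with rfl | hmem
          · exact ha List.mem_cons_self
          · exact ha (List.mem_cons.2 (Or.inr (h4 a hmem)))
        · intro v hv
          rcases List.mem_cons.1 hv with rfl | hv
          · exact List.mem_cons_self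
          · exact List.mem_cons.2 (Or.inr (h4 v hv))

end Rule3Aux
namespace Rule3Aux
open MixedGraph Relation

variable {V : Type}

lemma support_eq {G : MixedGraph V} : ∀ {x y : V} (w : G.Walk x y),
    w.support = x :: (w.inner ++ [y]) := by
  intro x y w
  induction w with
  | single ha hb h => rfl
  | cons ha hb h w ih => simp [Walk.support, Walk.inner, ih]

lemma not_blocked_single {G : MixedGraph V} {C : Set V} {x y : V} {ha hb : Bool}
    {h : G.Step x y ha hb} : ¬ Walk.Blocked G C (Walk.single ha hb h) := by
  simp [Walk.Blocked]

/-- build a walk from a reversed directed chain: `l` lists the vertices after `t`,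
each step of the chain pointing back towards `t`. -/
lemma walk_of_revchain (G : MixedGraph V) (C : Set V) :
    ∀ (l : List V) (t : V), l ≠ [] → List.Chain (fun a b => G.dir b a) t l →
    (∀ v ∈ t :: l, v ∉ C) →
    ∀ z, (t :: l).getLast? = some z →
    ∃ w : G.Walk t z, w.support = t :: l ∧ ¬ Walk.Blocked G C w ∧ w.firstArrow = true := by
  intro l
  induction l with
  | nil => intro t h; exact absurd rfl h
  | cons v l' ih =>
    intro t _ hc hC z hz
    have hd : G.dir v t := (List.chain_cons.1 hc).1
    cases l' with
    | nil =>
      have : v = z := by simpa using hz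
      subst this
      exact ⟨Walk.single true false hd, rfl, not_blocked_single, rfl⟩
    | cons u l'' =>
      have hz' : (v :: u :: l'').getLast? = some z := by
        rw [List.getLast?_cons_cons] at hz; exact hz
      obtain ⟨w', hsup, hnb, _⟩ := ih v (by simp) (List.chain_cons.1 hc).2
        (fun x hx => hC x (List.mem_cons.2 (Or.inr hx))) z hz'
      refine ⟨Walk.cons true false hd w', by simp [Walk.support, hsup], ?_, rfl⟩
      intro hbl
      rcases hbl with hbl | hbl
      · rw [if_neg (by simp)] at hbl
        exact hC v (by simp) hbl
      · exact hnb hbl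

/-- Main walk construction: from a transitive chain for a subrelation of `flip G.dir`,
get a directed path (pointing backwards) which is unblocked. -/
lemma walkOfTrans (G : MixedGraph V) (C T : Set V) (r : V → V → Prop)
    (hd : ∀ i j, r i j → G.dir i j) (hC : ∀ i j, r i j → j ∉ C)
    (hT : ∀ i j, r i j → j ∈ T)
    (a b : V) (haC : a ∉ C) (hne : a ≠ b) (h : Relation.TransGen r a b) :
    ∃ w : G.Walk b a, w.IsPath ∧ ¬ Walk.Blocked G C w ∧ ∀ v ∈ w.inner, v ∈ T := by
  obtain ⟨l, hchain, hlast⟩ := List.exists_isChain_cons_of_relationReflTransGen h.to_reflTransGen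
  have hlast' : (a :: l).getLast? = some b := by
    rw [List.getLast?_eq_getLast (List.cons_ne_nil _ _), hlast]
  obtain ⟨l', h1, h2, h3, h4⟩ := chain_dedup l.length l a le_rfl hchain
  rw [hlast'] at h2
  -- reverse the chain
  have hne' : l' ≠ [] := by rintro rfl; simp at h2; exact hne h2
  -- the reversed list
  have hrev : List.Chain' (fun x y => r y x) ((a :: l').reverse) := by
    exact List.isChain_reverse.2 h1
  have hbhead : (a :: l').reverse.head (by simp) = b := by
    rw [List.head_reverse]
    rw [← Option.some_inj, ← List.getLast?_eq_getLast]
    exact h2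
  obtain ⟨m, hm⟩ : ∃ m, (a :: l').reverse = b :: m :=
    ⟨(a :: l').reverse.tail, by rw [← hbhead]; exact (List.cons_head_tail (by simp)).symm⟩
  have hmne : m ≠ [] := by
    rintro rfl
    have h5 := congrArg List.length hm
    simp at h5
    exact hne' h5
  rw [hm] at hrev
  have hchain2 : List.Chain (fun x y => G.dir y x) b m := by
    have h6 : List.Chain (fun x y => r y x) b m := hrev
    exact List.IsChain.imp (fun x y hxy => hd _ _ hxy) h6
  have hlasta : (b :: m).getLast? = some a := by
    rw [← hm, List.getLast?_eq_getLast (by simp), List.getLast_reverse]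
    simp
  have hmem : ∀ v ∈ b :: m, v ∈ a :: l' := by
    intro v hv
    rw [← hm, List.mem_reverse] at hv; exact hv
  have hCm : ∀ v ∈ b :: m, v ∉ C := by
    intro v hv
    rcases List.mem_cons.1 (hmem v hv) with rfl | hv'
    · exact haC
    · obtain ⟨u, hu⟩ := chain_heads hchain v (h4 v hv')
      exact hC _ _ hu
  obtain ⟨w, hsup, hnb, _⟩ := walk_of_revchain G C m b hmne hchain2 hCm a hlasta
  refine ⟨w, ?_, hnb, ?_⟩
  · show w.support.Nodup
    rw [hsup, ← hm]
    exact List.nodup_reverse.2 h3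
  · have hbm : (b :: m).Nodup := by rw [← hm]; exact List.nodup_reverse.2 h3
    have hin : w.inner ++ [a] = m := by
      have h6 := support_eq w
      rw [hsup] at h6
      simp only [List.cons.injEq, true_and] at h6
      exact h6.symm
    intro v hv
    have hvm : v ∈ m := hin ▸ List.mem_append_left _ hv
    rcases List.mem_cons.1 (hmem v (List.mem_cons.2 (Or.inr hvm))) with rfl | hv'
    · exfalso
      have hnd : m.Nodup := (List.nodup_cons.1 hbm).2
      rw [← hin] at hnd
      exact (List.disjoint_of_nodup_append hnd) hv (List.mem_singleton_self _)
    · obtain ⟨u, hu⟩ := chain_heads hchain v (h4 v hv')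
      exact hT _ _ hu

end Rule3Aux
namespace Rule3Aux
open MixedGraph Relation

variable {V : Type} {G : MixedGraph V} {A W X : Set V}

/-- dir with tail outside A -/
def Rz (G : MixedGraph V) (A : Set V) (i j : V) : Prop := G.dir i j ∧ i ∉ A

/-- dir with both endpoints outside A -/
def R0 (G : MixedGraph V) (A : Set V) (i j : V) : Prop := G.dir i j ∧ i ∉ A ∧ j ∉ A

lemma gbar_dir {i j : V} : (G.removeInto A).dir i j ↔ G.dir i j ∧ j ∉ A := Iff.rfl

/-- L1a: heads of Gbar-chains stay outside A -/
lemma gbar_desc_notA {b d : V} (hb : b ∉ A)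
    (h : Relation.ReflTransGen (G.removeInto A).dir b d) : d ∉ A := by
  rcases h.cases_tail with rfl | ⟨c, _, hcd⟩
  · exact hb
  · exact hcd.2

/-- L1b -/
lemma gbar_desc_r0 {b d : V} (hb : b ∉ A)
    (h : Relation.ReflTransGen (G.removeInto A).dir b d) :
    Relation.ReflTransGen (R0 G A) b d := by
  induction h using Relation.ReflTransGen.head_induction_on with
  | refl => exact Relation.ReflTransGen.refl
  | head hstep htail ih =>
    exact Relation.ReflTransGen.head ⟨hstep.1, hb, hstep.2⟩ (ih hstep.2)

/-- L2: Rz-chains to targets outside A are R0-chains -/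
lemma rz_to_r0 {c t : V} (h : Relation.ReflTransGen (Rz G A) c t) (ht : t ∉ A) :
    Relation.ReflTransGen (R0 G A) c t := by
  induction h using Relation.ReflTransGen.head_induction_on with
  | refl => exact Relation.ReflTransGen.refl
  | @head c c' hstep htail ih =>
    have hc' : c' ∉ A := by
      rcases htail.cases_head with rfl | ⟨c'', hstep', _⟩
      · exact ht
      · exact hstep'.2
    exact Relation.ReflTransGen.head ⟨hstep.1, hstep.2, hc'⟩ ih

lemma r0_notA_left {c t : V} (h : Relation.ReflTransGen (R0 G A) c t) (ht : t ∉ A) :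
    c ∉ A := by
  rcases h.cases_head with rfl | ⟨c', hstep, _⟩
  · exact ht
  · exact hstep.2.1

/-- L3 -/
lemma r0_to_gxbar (hXA : X ⊆ A) {c t : V} (h : Relation.ReflTransGen (R0 G A) c t) :
    Relation.ReflTransGen (G.removeInto X).dir c t :=
  Relation.ReflTransGen.mono (fun _ j hij => ⟨hij.1, fun hj => hij.2.2 (hXA hj)⟩) _ _ h

/-- Rz-chain with target not in X gives a G_Xbar chain -/
lemma rz_to_gxbar (hXA : X ⊆ A) {c t : V} (h : Relation.ReflTransGen (Rz G A) c t)
    (ht : t ∉ X) : Relation.ReflTransGen (G.removeInto X).dir c t := by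
  induction h using Relation.ReflTransGen.head_induction_on with
  | refl => exact Relation.ReflTransGen.refl
  | @head c c' hstep htail ih =>
    have hc' : c' ∉ X := by
      rcases htail.cases_head with rfl | ⟨c'', hstep', _⟩
      · exact ht
      · exact fun hx => hstep'.2 (hXA hx)
    exact Relation.ReflTransGen.head ⟨hstep.1, hc'⟩ ih

lemma r0_to_gbar {c t : V} (h : Relation.ReflTransGen (R0 G A) c t) :
    Relation.ReflTransGen (G.removeInto A).dir c t :=
  Relation.ReflTransGen.mono (fun _ j hij => ⟨hij.1, hij.2.2⟩) _ _ h

/-- L4 dichotomy: an R0-chain either starts in AncSet of W (in G_Xbar) or avoids W -/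
lemma r0_dichotomy (hXA : X ⊆ A) {c t : V} (h : Relation.ReflTransGen (R0 G A) c t) :
    c ∈ (G.removeInto X).AncSet W ∨
      (c ∉ W ∧ Relation.ReflTransGen (fun i j => R0 G A i j ∧ j ∉ W) c t) := by
  induction h using Relation.ReflTransGen.head_induction_on with
  | refl =>
    by_cases hw : t ∈ W
    · exact Or.inl ⟨t, hw, Relation.ReflTransGen.refl⟩
    · exact Or.inr ⟨hw, Relation.ReflTransGen.refl⟩
  | @head c c' hstep htail ih =>
    by_cases hw : c ∈ W
    · exact Or.inl ⟨c, hw, Relation.ReflTransGen.refl⟩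
    · rcases ih with h1 | ⟨h2, h3⟩
      · left
        obtain ⟨w, hwW, hchain⟩ := h1
        exact ⟨w, hwW, Relation.ReflTransGen.head ⟨hstep.1, fun hx => hstep.2.2 (hXA hx)⟩ hchain⟩
      · by_cases hw' : c' ∈ W
        · exact Or.inl ⟨c', hw', Relation.ReflTransGen.single ⟨hstep.1, fun hx => hstep.2.2 (hXA hx)⟩⟩
        · exact Or.inr ⟨hw, Relation.ReflTransGen.head ⟨hstep, hw'⟩ h3⟩

/-- L5: map an R0-chain into the random part of the SWIG -/
lemma r0_to_swig {c t : V} (h : Relation.ReflTransGen (R0 G A) c t) :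
    Relation.ReflTransGen (G.swig A).dir (Sum.inl c) (Sum.inl t) := by
  induction h with
  | refl => exact Relation.ReflTransGen.refl
  | tail _ hstep ih => exact ih.tail (show (G.swig A).dir (Sum.inl _) (Sum.inl _) from ⟨hstep.1, hstep.2.1⟩)

lemma rz_to_swig {c t : V} (h : Relation.ReflTransGen (Rz G A) c t) :
    Relation.ReflTransGen (G.swig A).dir (Sum.inl c) (Sum.inl t) := by
  induction h with
  | refl => exact Relation.ReflTransGen.refl
  | tail _ hstep ih => exact ih.tail (show (G.swig A).dir (Sum.inl _) (Sum.inl _) from ⟨hstep.1, hstep.2⟩)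

/-- L6: descendants in the SWIG of a random vertex are random, via an Rz-chain -/
lemma swig_desc_pull' {d : V ⊕ V} :
    ∀ {x : V ⊕ V}, Relation.ReflTransGen (G.swig A).dir x d → ∀ b, x = Sum.inl b →
    ∃ w, d = Sum.inl w ∧ Relation.ReflTransGen (Rz G A) b w := by
  intro x h
  induction h using Relation.ReflTransGen.head_induction_on with
  | refl => exact fun b hb => ⟨b, hb, Relation.ReflTransGen.refl⟩
  | @head x y hstep htail ih =>
    rintro b rfl
    rcases y with j | j
    · obtain ⟨w, rfl, hchain⟩ := ih j rfl
      exact ⟨w, rfl, Relation.ReflTransGen.head ⟨hstep.1, hstep.2⟩ hchain⟩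
    · exact hstep.elim

lemma swig_desc_pull {b : V} {d : V ⊕ V}
    (h : Relation.ReflTransGen (G.swig A).dir (Sum.inl b) d) :
    ∃ w, d = Sum.inl w ∧ Relation.ReflTransGen (Rz G A) b w :=
  swig_desc_pull' h b rfl

/-- L8: a split vertex has no proper descendants in the SWIG -/
lemma swig_no_desc {a : V} {d : V ⊕ V} (ha : a ∈ A)
    (h : Relation.ReflTransGen (G.swig A).dir (Sum.inl a) d) : d = Sum.inl a := by
  rcases h.cases_head with rfl | ⟨y, hstep, _⟩
  · rfl
  · rcases y with j | j
    · exact absurd ha hstep.2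
    · exact hstep.elim
  
end Rule3Aux
namespace Rule3Aux
open MixedGraph Relation

variable {V : Type} {G : MixedGraph V} {A W X : Set V}

lemma step_to_swig {u b : V} {ha hb : Bool} (hu : u ∉ A) (hbA : b ∉ A)
    (h : (G.removeInto A).Step u b ha hb) : (G.swig A).Step (Sum.inl u) (Sum.inl b) ha hb := by
  cases ha <;> cases hb <;> simp_all [MixedGraph.Step, swig, removeInto]

lemma step_from_swig {u b : V} {ha hb : Bool} (hu : u ∉ A) (hbA : b ∉ A)
    (h : (G.swig A).Step (Sum.inl u) (Sum.inl b) ha hb) : (G.removeInto A).Step u b ha hb := by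
  cases ha <;> cases hb <;> simp_all [MixedGraph.Step, swig, removeInto]

lemma swig_step_from_A {a : V} {y : V ⊕ V} {ha' hb' : Bool} (haA : a ∈ A)
    (h : (G.swig A).Step (Sum.inl a) y ha' hb') : ha' = true := by
  cases ha'
  · exfalso
    cases hb'
    · exact h
    · rcases y with j | j
      · exact (h : G.dir a j ∧ a ∉ A).2 haA
      · exact (h : False)
  · rfl

lemma firstArrow_true_of_A {a : V} {y : V ⊕ V} (haA : a ∈ A)
    (σ : (G.swig A).Walk (Sum.inl a) y) : σ.firstArrow = true := by
  cases σ with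
  | single ha' hb' h => exact swig_step_from_A haA h
  | cons ha' hb' h w => exact swig_step_from_A haA h

/-- Push an A-avoiding unblocked walk in `G_Ā` into the SWIG. -/
lemma push_walk (hXA : X ⊆ A) :
    ∀ {u z : V} (π : (G.removeInto A).Walk u z), (∀ v ∈ π.support, v ∉ A) →
    ¬ Walk.Blocked (G.removeInto A) (W ∪ X) π →
    ∃ σ : (G.swig A).Walk (Sum.inl u) (Sum.inl z),
      σ.support = π.support.map Sum.inl ∧ σ.inner = π.inner.map Sum.inl ∧
      σ.firstArrow = π.firstArrow ∧ ¬ Walk.Blocked (G.swig A) (Sum.inl '' W) σ := by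
  intro u z π
  induction π with
  | @single u z ha hb h =>
    intro hsup _
    refine ⟨Walk.single ha hb (step_to_swig (hsup u (by simp [Walk.support]))
      (hsup z (by simp [Walk.support])) h), by simp [Walk.support], by simp [Walk.inner],
      by simp [Walk.firstArrow], not_blocked_single⟩
  | @cons u b z ha hb h rest ih =>
    intro hsup hnb
    simp only [Walk.Blocked, not_or] at hnb
    obtain ⟨hnb1, hnb2⟩ := hnb
    have hbA : b ∉ A := hsup b (by simp [Walk.support, support_eq rest])
    have huA : u ∉ A := hsup u (by simp [Walk.support])
    obtain ⟨σ', hs1, hs2, hs3, hs4⟩ := ih (fun v hv => hsup v (by simp [Walk.support, hv])) hnb2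
    refine ⟨Walk.cons ha hb (step_to_swig huA hbA h) σ', by simp [Walk.support, hs1],
      by simp [Walk.inner, hs2], rfl, ?_⟩
    simp only [Walk.Blocked, not_or]
    refine ⟨?_, hs4⟩
    by_cases hcol : hb = true ∧ rest.firstArrow = true
    · rw [if_pos (by rw [hs3]; exact hcol)]
      rw [if_pos hcol] at hnb1
      push_neg at hnb1
      obtain ⟨d, hd1, hd2⟩ := hnb1
      have hdA : d ∉ A := gbar_desc_notA hbA hd1
      have hdW : d ∈ W := by
        rcases hd2 with h' | h'
        · exact h'
        · exact absurd (hXA h') hdA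
      intro hall
      exact hall (Sum.inl d) (r0_to_swig (gbar_desc_r0 hbA hd1)) ⟨d, hdW, rfl⟩
    · rw [if_neg (by rw [hs3]; exact hcol)]
      rw [if_neg hcol] at hnb1
      rintro ⟨w', hw', heq⟩
      exact hnb1 (Or.inl (Sum.inl_injective heq ▸ hw'))

/-- Pull an unblocked walk with random interior from the SWIG back to `G_Ā`. -/
lemma pull_walk (hWA : ∀ w ∈ W, w ∉ A) (hXA : X ⊆ A) {z : V} (hz : z ∉ A) :
    ∀ {x y : V ⊕ V} (σ : (G.swig A).Walk x y) {u : V}, x = Sum.inl u → y = Sum.inl z → u ∉ A →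
    (∀ v ∈ σ.inner, v ∈ Set.range Sum.inl) →
    ¬ Walk.Blocked (G.swig A) (Sum.inl '' W) σ →
    ∃ π : (G.removeInto A).Walk u z,
      σ.support = π.support.map Sum.inl ∧ σ.firstArrow = π.firstArrow ∧
      ¬ Walk.Blocked (G.removeInto A) (W ∪ X) π := by
  intro x y σ
  induction σ with
  | @single x y ha hb h =>
    rintro u rfl rfl huA _ _
    exact ⟨Walk.single ha hb (step_from_swig huA hz h), by simp [Walk.support], rfl,
      not_blocked_single⟩
  | @cons x b y ha hb h rest ih =>
    rintro u rfl rfl huA hinner hnb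
    simp only [Walk.Blocked, not_or] at hnb
    obtain ⟨hnb1, hnb2⟩ := hnb
    obtain ⟨b', rfl⟩ : ∃ b', Sum.inl b' = b := hinner b (by simp [Walk.inner])
    by_cases hbA : b' ∈ A
    · exfalso
      -- b' must be a collider, but it has no descendants in the SWIG
      have hhb : hb = true := by
        cases hb
        · exfalso
          cases ha
          · exact (h : False)
          · exact ((h : G.dir b' u ∧ b' ∉ A).2) hbA
        · rfl
      have hfa : rest.firstArrow = true := firstArrow_true_of_A hbA rest
      rw [if_pos ⟨hhb, hfa⟩] at hnb1
      push_neg at hnb1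
      obtain ⟨d, hd1, hd2⟩ := hnb1
      have := swig_no_desc hbA hd1
      subst this
      obtain ⟨w', hw', heq⟩ := hd2
      exact hWA w' hw' (Sum.inl_injective heq ▸ hbA)
    · obtain ⟨π', hp1, hp2, hp3⟩ := ih rfl rfl hbA
        (fun v hv => hinner v (by simp [Walk.inner, hv])) hnb2
      refine ⟨Walk.cons ha hb (step_from_swig huA hbA h) π', by simp [Walk.support, hp1],
        rfl, ?_⟩
      simp only [Walk.Blocked, not_or]
      refine ⟨?_, hp3⟩
      by_cases hcol : hb = true ∧ π'.firstArrow = true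
      · rw [if_pos hcol]
        rw [if_pos (by rw [hp2]; exact hcol)] at hnb1
        push_neg at hnb1
        obtain ⟨d, hd1, hd2⟩ := hnb1
        obtain ⟨w', rfl, hchain⟩ := swig_desc_pull hd1
        obtain ⟨w'', hw'', heq⟩ := hd2
        have hww : w'' = w' := Sum.inl_injective heq
        subst hww
        have hwA : w'' ∉ A := hWA w'' hw''
        intro hall
        exact hall w'' (r0_to_gbar (rz_to_r0 hchain hwA)) (Or.inl hw'')
      · rw [if_neg hcol]
        rw [if_neg (by rw [hp2]; exact hcol)] at hnb1
        intro hbW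
        rcases hbW with hbW | hbX
        · exact hnb1 ⟨b', hbW, rfl⟩
        · exact hbA (hXA hbX)

end Rule3Aux
namespace Rule3Aux
open MixedGraph Relation

variable {V : Type} {G : MixedGraph V} {A W X : Set V}

/-- W10: a collider-free SWIG path from a random vertex to a fixed vertex is a
reversed directed path. -/
lemma shape_lemma {z1 : V} :
    ∀ {x y : V ⊕ V} (σ : (G.swig A).Walk x y), y = Sum.inr z1 →
    (∀ v ∈ σ.inner, v ∈ Set.range Sum.inl) →
    ¬ Walk.Blocked (G.swig A) ∅ σ →
    ∀ t : V, x = Sum.inl t →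
    (∃ c, G.dir z1 c ∧ Relation.ReflTransGen (Rz G A) c t) ∧ σ.firstArrow = true := by
  intro x y σ
  induction σ with
  | @single x y ha hb h =>
    rintro rfl _ _ t rfl
    cases hb
    · cases ha
      · exact (h : False).elim
      · exact ⟨⟨t, (h : G.dir z1 t ∧ z1 ∈ A).1, Relation.ReflTransGen.refl⟩, rfl⟩
    · exfalso
      cases ha
      · exact (h : False)
      · exact (h : False)
  | @cons x b y ha hb h rest ih =>
    rintro rfl hinner hnb t rfl
    simp only [Walk.Blocked, not_or] at hnb
    obtain ⟨hnb1, hnb2⟩ := hnb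
    obtain ⟨b', rfl⟩ : ∃ b', Sum.inl b' = b := hinner b (by simp [Walk.inner])
    obtain ⟨⟨c, hc1, hc2⟩, hfa⟩ := ih rfl (fun v hv => hinner v (by simp [Walk.inner, hv]))
      hnb2 b' rfl
    have hhb : hb = false := by
      cases hb
      · rfl
      · exfalso
        rw [if_pos ⟨rfl, hfa⟩] at hnb1
        exact hnb1 fun d _ hd => hd
    subst hhb
    cases ha
    · exact (h : False).elim
    · have h' : G.dir b' t ∧ b' ∉ A := h
      exact ⟨⟨c, hc1, hc2.tail ⟨h'.1, h'.2⟩⟩, rfl⟩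

/-- W9: scanning lemma -- an unblocked path to `Z` in `G_Ā` avoids `A` entirely. -/
lemma scan (hXA : X ⊆ A) {Y Z : Set V}
    (hAmem : ∀ v ∈ A, v ∈ X ∨ (v ∈ Z ∧ v ∉ (G.removeInto X).AncSet W))
    (hZX' : ∀ v ∈ Z, v ∉ X)
    (hesc : ∀ z' u, z' ∈ Z → z' ∉ (G.removeInto X).AncSet W → G.dir z' u → u ∉ A →
      ((∃ t ∈ Y, Relation.ReflTransGen (R0 G A) u t) ∨ u ∈ (G.removeInto X).AncSet W) → False) :
    ∀ {u z : V} (π : (G.removeInto A).Walk u z), z ∈ Z → u ∉ A →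
      ¬ Walk.Blocked (G.removeInto A) (W ∪ X) π →
      (π.firstArrow = true →
        ((∃ t ∈ Y, Relation.ReflTransGen (R0 G A) u t) ∨ u ∈ (G.removeInto X).AncSet W)) →
      ∀ v ∈ π.support, v ∉ A := by
  intro u z π
  induction π with
  | @single u z' ha hb h =>
    intro hzZ huA _ hinv
    have hzA : z' ∉ A := by
      intro hzA
      rcases hAmem z' hzA with hx | ⟨hzZ', hzAnc⟩
      · exact hZX' z' hzZ hx
      · cases hb
        · cases ha
          · exact (h : False)
          · exact hesc z' u hzZ' hzAnc (h : (G.removeInto A).dir z' u).1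
              huA (hinv (by simp [Walk.firstArrow]))
        · cases ha
          · exact ((h : (G.removeInto A).dir u z').2) hzA
          · exact ((h : (G.removeInto A).bi u z').2.2) hzA
    intro v hv
    rcases List.mem_cons.1 hv with rfl | hv
    · exact huA
    · rcases List.mem_cons.1 hv with rfl | hv
      · exact hzA
      · cases hv
  | @cons u b z' ha hb h rest ih =>
    intro hzZ huA hnb hinv
    simp only [Walk.Blocked, not_or] at hnb
    obtain ⟨hnb1, hnb2⟩ := hnb
    have hbA : b ∉ A := by
      intro hbA
      -- arrowhead at b is impossible
      have hhb : hb = false := by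
        cases hb
        · rfl
        · exfalso
          cases ha
          · exact ((h : (G.removeInto A).dir u b).2) hbA
          · exact ((h : (G.removeInto A).bi u b).2.2) hbA
      subst hhb
      -- so b is a source; non-collider not in W ∪ X
      rw [if_neg (by simp)] at hnb1
      have hbZ : b ∈ Z ∧ b ∉ (G.removeInto X).AncSet W := by
        rcases hAmem b hbA with hx | hok
        · exact absurd (Or.inr hx) hnb1
        · exact hok
      cases ha
      · exact (h : False)
      · have h' : G.dir b u ∧ u ∉ A := h
        exact hesc b u hbZ.1 hbZ.2 h'.1 huA (hinv (by simp [Walk.firstArrow]))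
    have hrest := ih hzZ hbA hnb2 ?_
    · intro v hv
      rcases List.mem_cons.1 hv with rfl | hv
      · exact huA
      · exact hrest v hv
    · -- invariant for the rest of the walk
      intro hfa
      cases hb
      · -- tail at b from the left edge: extend the chain
        cases ha
        · exact (h : False).elim
        · have h' : G.dir b u ∧ u ∉ A := h
          rcases hinv (by simp [Walk.firstArrow]) with ⟨t, htY, hchain⟩ | hAnc
          · exact Or.inl ⟨t, htY, Relation.ReflTransGen.head ⟨h'.1, hbA, h'.2⟩ hchain⟩
          · obtain ⟨w, hw, hch⟩ := hAnc
            exact Or.inr ⟨w, hw, Relation.ReflTransGen.head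
              ⟨h'.1, fun hx => h'.2 (hXA hx)⟩ hch⟩
      · -- b is a collider: it has a descendant in W
        rw [if_pos ⟨rfl, hfa⟩] at hnb1
        push_neg at hnb1
        obtain ⟨d, hd1, hd2⟩ := hnb1
        have hdA : d ∉ A := gbar_desc_notA hbA hd1
        have hdW : d ∈ W := by
          rcases hd2 with h' | h'
          · exact h'
          · exact absurd (hXA h') hdA
        exact Or.inr ⟨d, hdW, r0_to_gxbar hXA (gbar_desc_r0 hbA hd1)⟩

end Rule3Aux
namespace Rule3Aux
open MixedGraph Relation

variable {V : Type} {G : MixedGraph V} {A : Set V}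

lemma r0_to_swig' {c t : V} (h : Relation.ReflTransGen (R0 G A) c t) :
    Relation.ReflTransGen (fun p q => (G.swig A).dir p q ∧ q ∈ Set.range Sum.inl)
      (Sum.inl c) (Sum.inl t) := by
  induction h with
  | refl => exact Relation.ReflTransGen.refl
  | tail _ hstep ih =>
    exact ih.tail ⟨show (G.swig A).dir (Sum.inl _) (Sum.inl _) from ⟨hstep.1, hstep.2.1⟩,
      ⟨_, rfl⟩⟩

end Rule3Aux

open MixedGraph Relation Rule3Aux in
/-- **Equivalence of Rule 3 of po-calculus and Rule 3 of do-calculus**: for an ADMG `G`,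
disjoint `Y, Z, W, X ⊆ V`, `Z₁ = Z \ An_{G_{X̄}}(W)` and `Z₂ = Z ∩ An_{G_{X̄}}(W)`, the
do-calculus condition `(Y ⊥_m Z | W ∪ X)` in `G_{X̄,Z̄₁}` holds iff both po-calculus
conditions `(Y(x,z₁), W(x,z₁) ⊥ z₁)` and `(Y(x,z₁) ⊥ Z₂(x,z₁) | W(x,z₁))` hold in the
SWIG `G(x,z₁)`. -/
theorem rule3_po_iff_do {V : Type} (G : MixedGraph V) (hacyc : G.Acyclic)
    (Y Z W X : Set V)
    (hYZ : Disjoint Y Z) (hYW : Disjoint Y W) (hYX : Disjoint Y X)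
    (hZW : Disjoint Z W) (hZX : Disjoint Z X) (hWX : Disjoint W X) :
    MSep (G.removeInto (X ∪ (Z \ (G.removeInto X).AncSet W))) Y Z (W ∪ X) ↔
      (MSepIn (G.swig (X ∪ (Z \ (G.removeInto X).AncSet W))) (Set.range Sum.inl)
          (Sum.inl '' (Y ∪ W)) (Sum.inr '' (Z \ (G.removeInto X).AncSet W)) ∅ ∧
        MSepIn (G.swig (X ∪ (Z \ (G.removeInto X).AncSet W))) (Set.range Sum.inl)
          (Sum.inl '' Y) (Sum.inl '' (Z ∩ (G.removeInto X).AncSet W)) (Sum.inl '' W)) := by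
  classical
  set AncW := (G.removeInto X).AncSet W with hAncW
  set A := X ∪ (Z \ AncW) with hA
  have hXA : X ⊆ A := Set.subset_union_left
  have hYA : ∀ y ∈ Y, y ∉ A := by
    rintro y hy (hx | ⟨hz, _⟩)
    exacts [Set.disjoint_left.1 hYX hy hx, Set.disjoint_left.1 hYZ hy hz]
  have hWA : ∀ w ∈ W, w ∉ A := by
    rintro w hw (hx | ⟨hz, _⟩)
    exacts [Set.disjoint_left.1 hWX hw hx, Set.disjoint_right.1 hZW hw hz]
  have hZX' : ∀ v ∈ Z, v ∉ X := fun v hv => Set.disjoint_left.1 hZX hv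
  have hZWnot : ∀ v ∈ Z, v ∉ W := fun v hv => Set.disjoint_left.1 hZW hv
  have hAmem : ∀ v ∈ A, v ∈ X ∨ (v ∈ Z ∧ v ∉ AncW) := by
    rintro v (hx | hz)
    exacts [Or.inl hx, Or.inr ⟨hz.1, hz.2⟩]
  constructor
  · intro hD
    refine ⟨?_, ?_⟩
    · rintro y' ⟨t, htYW, rfl⟩ z' ⟨z1, hz1, rfl⟩ σ hpath hinner
      by_contra hnb
      obtain ⟨⟨c, hc1, hc2⟩, _⟩ := shape_lemma σ rfl hinner hnb t rfl
      have hcX : c ∉ X := by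
        rcases hc2.cases_head with rfl | ⟨c', hstep, _⟩
        · rcases htYW with htY | htW
          · exact fun hx => hYA _ htY (hXA hx)
          · exact Set.disjoint_left.1 hWX htW
        · exact fun hx => hstep.2 (hXA hx)
      rcases htYW with htY | htW
      · have htA : t ∉ A := hYA t htY
        have hr0 : Relation.ReflTransGen (R0 G A) c t := rz_to_r0 hc2 htA
        rcases r0_dichotomy (W := W) hXA hr0 with hAnc | ⟨hcW, hclean⟩
        · obtain ⟨w, hw, hch⟩ := hAnc
          exact hz1.2 ⟨w, hw, Relation.ReflTransGen.head ⟨hc1, hcX⟩ hch⟩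
        · have hcA : c ∉ A := r0_notA_left hr0 htA
          have htrans : Relation.TransGen
              (fun i j => (G.removeInto A).dir i j ∧ j ∉ (W ∪ X)) z1 t := by
            refine Relation.TransGen.head' ⟨⟨hc1, hcA⟩, ?_⟩ (Relation.ReflTransGen.mono ?_ _ _ hclean)
            · rintro (hw | hx)
              exacts [hcW hw, hcA (hXA hx)]
            · rintro i j ⟨⟨hd, _, hjA⟩, hjW⟩
              exact ⟨⟨hd, hjA⟩, by rintro (hh | hh); exacts [hjW hh, hjA (hXA hh)]⟩
          obtain ⟨w, hw1, hw2, _⟩ := walkOfTrans (G.removeInto A) (W ∪ X) Set.univ _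
            (fun i j hh => hh.1) (fun i j hh => hh.2) (fun i j _ => trivial) z1 t
            (by rintro (hw | hx); exacts [hZWnot z1 hz1.1 hw, hZX' z1 hz1.1 hx])
            (fun he => Set.disjoint_left.1 hYZ htY (he ▸ hz1.1)) htrans
          exact hw2 (hD t htY z1 hz1.1 w hw1 fun v _ => trivial)
      · exact hz1.2 ⟨t, htW, Relation.ReflTransGen.head ⟨hc1, hcX⟩
          (rz_to_gxbar hXA hc2 (Set.disjoint_left.1 hWX htW))⟩
    · rintro y' ⟨y, hyY, rfl⟩ z' ⟨z2, hz2, rfl⟩ σ hpath hinner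
      by_contra hnb
      have hz2A : z2 ∉ A := by
        rintro (hx | ⟨_, hnanc⟩)
        exacts [hZX' z2 hz2.1 hx, hnanc hz2.2]
      obtain ⟨π, hp1, _, hp3⟩ := pull_walk hWA hXA hz2A σ rfl rfl (hYA y hyY) hinner hnb
      have hpath' : π.IsPath := by
        have : (π.support.map (Sum.inl : V → V ⊕ V)).Nodup := by rw [← hp1]; exact hpath
        exact this.of_map _
      exact hp3 (hD y hyY z2 hz2.1 π hpath' fun v _ => trivial)
  · rintro ⟨hS1, hS2⟩ y hyY z hzZ π hpath _
    by_contra hnb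
    have hesc : ∀ z' u, z' ∈ Z → z' ∉ AncW → G.dir z' u → u ∉ A →
        ((∃ t ∈ Y, Relation.ReflTransGen (R0 G A) u t) ∨ u ∈ AncW) → False := by
      rintro z' u hz'Z hz'A hdir huA (⟨t, htY, hchain⟩ | hAnc)
      · have htrans : Relation.TransGen
            (fun p q => (G.swig A).dir p q ∧ q ∈ Set.range Sum.inl)
            (Sum.inr z') (Sum.inl t) := by
          refine Relation.TransGen.head' ⟨?_, ⟨u, rfl⟩⟩ (r0_to_swig' hchain)
          exact show (G.swig A).dir (Sum.inr z') (Sum.inl u) from ⟨hdir, Or.inr ⟨hz'Z, hz'A⟩⟩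
        obtain ⟨σ, hs1, hs2, hs3⟩ := walkOfTrans (G.swig A) ∅ (Set.range Sum.inl) _
          (fun i j hh => hh.1) (fun i j _ => by simp) (fun i j hh => hh.2)
          (Sum.inr z') (Sum.inl t) (by simp) (by simp) htrans
        exact hs2 (hS1 (Sum.inl t) ⟨t, Or.inl htY, rfl⟩ (Sum.inr z') ⟨z', ⟨hz'Z, hz'A⟩, rfl⟩
          σ hs1 hs3)
      · obtain ⟨w, hw, hch⟩ := hAnc
        exact hz'A ⟨w, hw, Relation.ReflTransGen.head ⟨hdir, fun hx => huA (hXA hx)⟩ hch⟩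
    have hallA : ∀ v ∈ π.support, v ∉ A :=
      scan hXA hAmem hZX' hesc π hzZ (hYA y hyY) hnb
        (fun _ => Or.inl ⟨y, hyY, Relation.ReflTransGen.refl⟩)
    have hzAnc : z ∈ AncW := by
      by_contra hna
      exact hallA z (by rw [support_eq]; simp) (Or.inr ⟨hzZ, hna⟩)
    obtain ⟨σ, hs1, hs2, _, hs4⟩ := push_walk hXA π hallA hnb
    refine hs4 (hS2 (Sum.inl y) ⟨y, hyY, rfl⟩ (Sum.inl z) ⟨z, ⟨hzZ, hzAnc⟩, rfl⟩ σ ?_ ?_)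
    · show σ.support.Nodup
      rw [hs1]
      exact hpath.map Sum.inl_injective
    · intro v hv
      rw [hs2] at hv
      obtain ⟨w', _, rfl⟩ := List.mem_map.1 hv
      exact ⟨w', rfl⟩
end

section
/- Let H be an ADMG and let X, Z1, W, Y be disjoint vertex sets such that no edge of H has an arrowhead at any vertex of X ∪ Z1 and no element of W is a descendant of Z1 in H. If (Y ⊥_m Z1 | W ∪ X)_H, then no element of Z1 is an ancestor of Y in H. -/
namespace MixedGraph

variable {V : Type}

/-- All edges of the walk have marks `(true, false)`, i.e. the walk is a reversed
directed path. -/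
def Walk.AllTF {G : MixedGraph V} : ∀ {x y : V}, Walk G x y → Prop
  | _, _, .single ha hb _ => ha = true ∧ hb = false
  | _, _, .cons ha hb _ w => ha = true ∧ hb = false ∧ Walk.AllTF w

lemma exists_good_walk (H : MixedGraph V) (hacyc : H.Acyclic) {z y : V}
    (h : Relation.TransGen H.dir z y) :
    ∃ w : H.Walk y z, w.AllTF ∧ w.support.Nodup ∧
      (∀ v ∈ w.support, Relation.ReflTransGen H.dir v y) ∧
      (∀ v ∈ w.inner, (∃ c, H.dir c v) ∧ Relation.ReflTransGen H.dir z v) := by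
  induction h with
  | single h =>
    rename_i b
    have hne : b ≠ z := by
      rintro rfl; exact hacyc _ (Relation.TransGen.single h)
    refine ⟨Walk.single true false h, ⟨rfl, rfl⟩, ?_, ?_, ?_⟩
    · simp [Walk.support, hne]
    · intro v hv
      simp [Walk.support] at hv
      rcases hv with rfl | rfl
      · exact Relation.ReflTransGen.refl
      · exact Relation.ReflTransGen.single h
    · intro v hv; simp [Walk.inner] at hv
  | tail h₁ h₂ ih =>
    rename_i b c
    obtain ⟨w, hTF, hnd, hsup, hin⟩ := ih
    have hstep : H.Step c b true false := h₂
    refine ⟨Walk.cons true false hstep w, ⟨rfl, rfl, hTF⟩, ?_, ?_, ?_⟩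
    · simp only [Walk.support, List.nodup_cons]
      refine ⟨fun hc => ?_, hnd⟩
      exact hacyc c (Relation.TransGen.tail' (hsup c hc) h₂)
    · intro v hv
      simp only [Walk.support, List.mem_cons] at hv
      rcases hv with rfl | hv
      · exact Relation.ReflTransGen.refl
      · exact (hsup v hv).tail h₂
    · intro v hv
      simp only [Walk.inner, List.mem_cons] at hv
      rcases hv with rfl | hv
      · obtain ⟨d, _, hd⟩ := Relation.TransGen.tail'_iff.mp h₁
        exact ⟨⟨d, hd⟩, h₁.to_reflTransGen⟩
      · exact hin v hv

lemma not_blocked_of_allTF (H : MixedGraph V) (C : Set V) :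
    ∀ {x y : V} (w : H.Walk x y), w.AllTF → (∀ v ∈ w.inner, v ∉ C) →
      ¬ Walk.Blocked H C w := by
  intro x y w
  induction w with
  | single ha hb h =>
    intro _ _ hb
    simp [Walk.Blocked] at hb
  | cons ha hb h w ih =>
    rename_i a b c
    rintro ⟨-, rfl, hTF⟩ hinner hbl
    simp only [Walk.Blocked] at hbl
    rcases hbl with hbl | hbl
    · rw [if_neg (by simp)] at hbl
      exact hinner b (by simp [Walk.inner]) hbl
    · exact ih hTF (fun v hv => hinner v (by simp [Walk.inner, hv])) hbl

end MixedGraph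

open MixedGraph in
/-- If no edge of the ADMG `H` has an arrowhead at `X ∪ Z₁`, no element of `W` is a
descendant of `Z₁`, and `(Y ⊥_m Z₁ | W ∪ X)` holds in `H`, then no element of `Z₁` is an
ancestor of `Y` in `H`. -/
theorem z1_not_ancestor {V : Type} (H : MixedGraph V) (hacyc : H.Acyclic)
    (X Z₁ W Y : Set V)
    (hXZ : Disjoint X Z₁) (hXW : Disjoint X W) (hXY : Disjoint X Y)
    (hZW : Disjoint Z₁ W) (hZY : Disjoint Z₁ Y) (hWY : Disjoint W Y)
    (hdir : ∀ i j, H.dir i j → j ∉ X ∪ Z₁)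
    (hbi : ∀ i j, H.bi i j → i ∉ X ∪ Z₁ ∧ j ∉ X ∪ Z₁)
    (hdesc : ∀ z ∈ Z₁, ∀ w ∈ W, ¬ H.Desc z w)
    (hsep : MSep H Y Z₁ (W ∪ X)) :
    ∀ z ∈ Z₁, ∀ y ∈ Y, ¬ Relation.ReflTransGen H.dir z y := by
  intro z hz y hy hanc
  have hne : z ≠ y := fun h => (Set.disjoint_left.mp hZY hz) (h ▸ hy)
  have htg : Relation.TransGen H.dir z y := by
    rcases hanc.cases_head with h | ⟨c, hc, hcy⟩
    · exact absurd h hne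
    · exact Relation.TransGen.head' hc hcy
  obtain ⟨w, hTF, hnd, hsup, hin⟩ := exists_good_walk H hacyc htg
  have hblk := hsep y hy z hz w hnd (fun v _ => Set.mem_univ v)
  refine not_blocked_of_allTF H (W ∪ X) w hTF ?_ hblk
  intro v hv hvC
  obtain ⟨⟨c, hcv⟩, hzv⟩ := hin v hv
  rcases hvC with hvW | hvX
  · exact hdesc z hz v hvW hzv
  · exact hdir c v hcv (Or.inl hvX)
end

section
/- Soundness of Rule 3*: let a structural causal model with causal DAG G be given, and let Y, Z, X be disjoint subsets of K with value assignments x to X and z to Z. If (Y(x,z) ⊥ z)_{G(x,z)}, i.e., every fixed vertex in z is separated from the random vertices Y(x,z) in the SWIG G(x,z), then V_i(x,z)(ε) = V_i(x)(ε) for every i ∈ Y and every noise vector ε; in particular, in any functional causal model, Y(x,z) and Y(x) have the same distribution, so p(Y(x,z)) = p(Y(x)). -/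
/-! ### Functional causal models: an SCM together with mutually independent noises -/

/-- A functional causal model (NPSEM-IE): a structural causal model together with a probability
space and mutually independent exogenous noise variables `ε_1, …, ε_k`. -/
structure FCM (k : ℕ) extends SCM k where
  Ω : Type
  [mΩ : MeasurableSpace Ω]
  μ : MeasureTheory.Measure Ω
  isProb : MeasureTheory.IsProbabilityMeasure μ
  [mE : ∀ i, MeasurableSpace (E i)]
  e : ∀ i, Ω → E i
  e_meas : ∀ i, Measurable (e i)
  indep : ProbabilityTheory.iIndepFun e μ

attribute [instance] FCM.mΩ FCM.mE

/-- The potential outcome random variables `V_i(a)` of a functional causal model. -/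
noncomputable def FCM.PO {k : ℕ} (F : FCM k) (A : Set (Fin k)) (a : ∀ j ∈ A, F.X j)
    (ω : F.Ω) : ∀ i, F.X i :=
  F.toSCM.po A a (fun i => F.e i ω)

/-- The event `{S(a) = s}`, i.e. that the potential outcomes `V_i(a)` for `i ∈ S` take the
values prescribed by `s`. -/
def FCM.Ev {k : ℕ} (F : FCM k) (A : Set (Fin k)) (a : ∀ j ∈ A, F.X j) (S : Set (Fin k))
    (s : ∀ i ∈ S, F.X i) : Set F.Ω :=
  {ω | ∀ i (h : i ∈ S), F.PO A a ω i = s i h}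

section Rule3Aux
open MixedGraph

variable {k : ℕ}

/-- `i` is reachable from `Z` by a directed path whose intermediate vertices avoid `A`. -/
def ReachZ (M : SCM k) (A Z : Set (Fin k)) (i : Fin k) : Prop :=
  ∃ zv ∈ Z, ∃ j, zv ∈ M.pa j ∧
    Relation.ReflTransGen (fun a b => a ∈ M.pa b ∧ a ∉ A) j i

lemma chain_walk (M : SCM k) (A : Set (Fin k)) {j i : Fin k}
    (h : Relation.ReflTransGen (fun a b => a ∈ M.pa b ∧ a ∉ A) j i) :
    j = i ∨ ∃ w : Walk (M.graph.swig A) (Sum.inl j) (Sum.inl i),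
      w.firstArrow = false ∧ ¬ Walk.Blocked (M.graph.swig A) ∅ w ∧
      (∀ v ∈ w.inner, v ∈ Set.range Sum.inl) ∧ w.support.Nodup ∧
      (∀ v ∈ w.support, ∃ m, v = Sum.inl m ∧ j ≤ m) := by
  induction h using Relation.ReflTransGen.head_induction_on with
  | refl => exact Or.inl rfl
  | head hac _ ih =>
    rename_i a c _
    obtain ⟨hpa, hA⟩ := hac
    have hlt : a < c := M.pa_lt _ _ hpa
    have hstep : (M.graph.swig A).Step (Sum.inl a) (Sum.inl c) false true := ⟨hpa, hA⟩
    rcases ih with rfl | ⟨w, hfa, hbl, hin, hnd, hsup⟩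
    · refine Or.inr ⟨.single false true hstep, rfl, ?_, ?_, ?_, ?_⟩
      · simp [Walk.Blocked]
      · simp [Walk.inner]
      · simp [Walk.support]
        exact ne_of_lt hlt
      · intro v hv
        simp [Walk.support] at hv
        rcases hv with rfl | rfl
        · exact ⟨a, rfl, le_refl a⟩
        · exact ⟨c, rfl, le_of_lt hlt⟩
    · refine Or.inr ⟨.cons false true hstep w, rfl, ?_, ?_, ?_, ?_⟩
      · simp [Walk.Blocked, hfa, hbl]
      · intro v hv
        simp [Walk.inner] at hv
        rcases hv with rfl | hv
        · exact ⟨c, rfl⟩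
        · exact hin v hv
      · simp only [Walk.support, List.nodup_cons]
        refine ⟨fun hmem => ?_, hnd⟩
        obtain ⟨m, hm, hcm⟩ := hsup _ hmem
        obtain rfl : a = m := Sum.inl.inj hm
        exact absurd hcm (not_le.mpr hlt)
      · intro v hv
        simp only [Walk.support, List.mem_cons] at hv
        rcases hv with rfl | hv
        · exact ⟨a, rfl, le_refl a⟩
        · obtain ⟨m, rfl, hcm⟩ := hsup _ hv
          exact ⟨m, rfl, le_of_lt (lt_of_lt_of_le hlt hcm)⟩

lemma not_reachZ (M : SCM k) (X Z Y : Set (Fin k))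
    (hsep : MSepIn (M.graph.swig (X ∪ Z)) (Set.range Sum.inl) (Sum.inr '' Z) (Sum.inl '' Y) ∅)
    {i : Fin k} (hi : i ∈ Y) : ¬ ReachZ M (X ∪ Z) Z i := by
  rintro ⟨zv, hzv, j, hpa, hchain⟩
  have hstep0 : (M.graph.swig (X ∪ Z)).Step (Sum.inr zv) (Sum.inl j) false true :=
    ⟨hpa, Or.inr hzv⟩
  rcases chain_walk M (X ∪ Z) hchain with rfl | ⟨w, hfa, hbl, hin, hnd, hsup⟩
  · have hw := hsep _ ⟨zv, hzv, rfl⟩ _ ⟨_, hi, rfl⟩ (.single false true hstep0)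
      (by simp [Walk.IsPath, Walk.support]) (by simp [Walk.inner])
    simpa [Walk.Blocked] using hw
  · have hw := hsep _ ⟨zv, hzv, rfl⟩ _ ⟨i, hi, rfl⟩ (.cons false true hstep0 w)
      ?_ ?_
    · simp only [Walk.Blocked, hfa] at hw
      simp at hw
      exact hbl hw
    · show (Sum.inr zv :: w.support).Nodup
      refine List.nodup_cons.mpr ⟨fun hmem => ?_, hnd⟩
      obtain ⟨m, hm, _⟩ := hsup _ hmem
      cases hm
    · intro v hv
      simp only [Walk.inner, List.mem_cons] at hv
      rcases hv with rfl | hv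
      · exact ⟨j, rfl⟩
      · exact hin v hv

lemma po_eq_aux (M : SCM k) (X Z : Set (Fin k)) (x : ∀ j ∈ X, M.X j) (z : ∀ j ∈ Z, M.X j)
    (ε : ∀ i, M.E i) :
    ∀ i : Fin k, ¬ ReachZ M (X ∪ Z) Z i →
      M.po (X ∪ Z) (M.combine x z) ε i = M.po X x ε i := by
  suffices H : ∀ n (i : Fin k), (i : ℕ) < n → ¬ ReachZ M (X ∪ Z) Z i →
      M.po (X ∪ Z) (M.combine x z) ε i = M.po X x ε i by
    exact fun i => H k i i.isLt
  intro n
  induction n with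
  | zero => exact fun i hi => absurd hi (Nat.not_lt_zero _)
  | succ n IH =>
    intro i hi hnr
    rw [SCM.po, SCM.po]
    congr 1
    funext j hj
    by_cases hjX : j ∈ X
    · rw [dif_pos (Set.mem_union_left Z hjX), dif_pos hjX]
      simp [SCM.combine, hjX]
    · by_cases hjZ : j ∈ Z
      · exact absurd ⟨j, hjZ, i, hj, Relation.ReflTransGen.refl⟩ hnr
      · have hjA : j ∉ X ∪ Z := by simp [hjX, hjZ]
        rw [dif_neg hjA, dif_neg hjX]
        refine IH j (lt_of_lt_of_le (M.pa_lt i j hj) (Nat.lt_succ_iff.mp hi)) ?_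
        rintro ⟨zv, hzv, j', hpa', hchain⟩
        exact hnr ⟨zv, hzv, j', hpa', hchain.tail ⟨hj, hjA⟩⟩

end Rule3Aux
open MixedGraph in
/-- **Soundness of Rule 3***: if every fixed vertex in `z` is separated from the random
vertices `Y(x,z)` in the SWIG `G(x,z)`, then `V_i(x,z)(ε) = V_i(x)(ε)` for every `i ∈ Y`
and noise vector `ε`; in particular, in any functional causal model `Y(x,z)` and `Y(x)`
have the same distribution, i.e. `p(Y(x,z)) = p(Y(x))`. -/
theorem rule3_star_sound {k : ℕ} (F : FCM k) (Y Z X : Set (Fin k))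
    (hYZ : Disjoint Y Z) (hYX : Disjoint Y X) (hZX : Disjoint Z X)
    (x : ∀ j ∈ X, F.X j) (z : ∀ j ∈ Z, F.X j)
    (hsep : MSepIn (F.graph.swig (X ∪ Z)) (Set.range Sum.inl) (Sum.inr '' Z) (Sum.inl '' Y) ∅) :
    -- pointwise equality of the potential outcomes, for every noise vector
    (∀ (ε : ∀ i, F.E i), ∀ i ∈ Y,
        F.toSCM.po (X ∪ Z) (F.toSCM.combine x z) ε i = F.toSCM.po X x ε i) ∧
    -- in particular, `Y(x,z)` and `Y(x)` have the same distribution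
    (∀ y : ∀ i ∈ Y, F.X i,
        F.μ (F.Ev (X ∪ Z) (F.toSCM.combine x z) Y y) = F.μ (F.Ev X x Y y)) := by

  constructor
  · intro ε i hi
    exact po_eq_aux F.toSCM X Z x z ε i (not_reachZ F.toSCM X Z Y hsep hi)
  · intro y
    have hEv : F.Ev (X ∪ Z) (F.toSCM.combine x z) Y y = F.Ev X x Y y := by
      ext ω
      have hpt : ∀ i ∈ Y, F.PO (X ∪ Z) (F.toSCM.combine x z) ω i = F.PO X x ω i :=
        fun i hi => po_eq_aux F.toSCM X Z x z _ i (not_reachZ F.toSCM X Z Y hsep hi)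
      simp only [FCM.Ev, Set.mem_setOf_eq]
      exact ⟨fun h i hh => (hpt i hh).symm.trans (h i hh),
             fun h i hh => (hpt i hh).trans (h i hh)⟩
    rw [hEv]
end
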